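/- Let X be a random variable with |X| ≤ a almost surely and η > 0 with 2ηa bounded. Then E[X] + (1/η) log E[e^{-ηX}] ≤ κ(2ηa) · η · Var(X), where κ(x) = (e^x - x - 1)/x² for x ≠ 0 and κ(0) = 1/2. -/

import Mathlib

/-!
The series `(eˣ - x - 1) / x² = ∑ xⁿ / (n + 2)!` is dominated termwise at `|x| ≤ c` by its value
at `c`, so `e^Y ≤ 1 + Y + κ(c) Y²` whenever `|Y| ≤ c`. For the centred variable
`Y = -η (X - E X)`, which satisfies `|Y| ≤ 2ηa`, this gives `E e^Y ≤ 1 + κ(2ηa) η² Var X`;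
since `log E e^{-ηX} = -η E X + log E e^Y`, the bound `log t ≤ t - 1` finishes the proof.
-/

open MeasureTheory Real
open scoped Nat

lemma Real.hasSum_exp_sub_sub_one (x : ℝ) :
    HasSum (fun n : ℕ => x ^ (n + 2) / (n + 2)!) (exp x - x - 1) := by
  have h_head : x + 1 = ∑ n ∈ Finset.range 2, x ^ n / n ! := by
    simp [Finset.sum_range_succ, add_comm]
  rw [sub_sub, h_head, exp_eq_exp_ℝ]
  exact (hasSum_nat_add_iff' 2).mpr (NormedSpace.expSeries_div_hasSum_exp x)

lemma Real.sq_mul_exp_sub_sub_one_le {x c : ℝ} (hx : |x| ≤ c) :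
    c ^ 2 * (exp x - x - 1) ≤ x ^ 2 * (exp c - c - 1) := by
  refine hasSum_le (fun n => ?_) ((hasSum_exp_sub_sub_one x).mul_left _)
    ((hasSum_exp_sub_sub_one c).mul_left _)
  have hpow : x ^ n ≤ c ^ n :=
    (le_abs_self _).trans (abs_pow x n ▸ pow_le_pow_left₀ (abs_nonneg x) hx n)
  have hterm : c ^ 2 * x ^ (n + 2) ≤ x ^ 2 * c ^ (n + 2) :=
    calc c ^ 2 * x ^ (n + 2) = x ^ 2 * c ^ 2 * x ^ n := by ring
      _ ≤ x ^ 2 * c ^ 2 * c ^ n := by gcongr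
      _ = x ^ 2 * c ^ (n + 2) := by ring
  simp only [mul_div_assoc']
  gcongr

lemma Real.exp_le_one_add_add_mul_sq {x c : ℝ} (hc : 0 < c) (hx : |x| ≤ c) :
    exp x ≤ 1 + x + (exp c - c - 1) / c ^ 2 * x ^ 2 := by
  have := sq_mul_exp_sub_sub_one_le hx
  rw [div_mul_eq_mul_div, ← sub_le_iff_le_add', le_div_iff₀ (by positivity)]
  linarith

namespace MeasureTheory

variable {Ω : Type*} [MeasurableSpace Ω] {μ : Measure Ω}

lemma log_integral_exp_mul_eq_add (X : Ω → ℝ) (t m : ℝ)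
    (hpos : 0 < ∫ ω, exp (t * (X ω - m)) ∂μ) :
    log (∫ ω, exp (t * X ω) ∂μ) = t * m + log (∫ ω, exp (t * (X ω - m)) ∂μ) := by
  have hsplit : ∫ ω, exp (t * X ω) ∂μ = exp (t * m) * ∫ ω, exp (t * (X ω - m)) ∂μ := by
    rw [← integral_const_mul]
    congr 1 with ω
    rw [← exp_add]
    ring_nf
  rw [hsplit, log_mul (exp_ne_zero _) hpos.ne', log_exp]

variable [IsProbabilityMeasure μ]

lemma ae_abs_sub_integral_le {X : Ω → ℝ} {a : ℝ} (hbdd : ∀ᵐ ω ∂μ, |X ω| ≤ a) :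
    ∀ᵐ ω ∂μ, |X ω - ∫ ω', X ω' ∂μ| ≤ 2 * a := by
  have hmean : |∫ ω, X ω ∂μ| ≤ a := by
    simpa using norm_integral_le_of_norm_le_const (μ := μ) (f := X) (by simpa using hbdd)
  filter_upwards [hbdd] with ω hω
  linarith [abs_sub (X ω) (∫ ω', X ω' ∂μ)]

lemma log_integral_exp_le_of_abs_le {Y : Ω → ℝ} {c : ℝ} (hY : AEStronglyMeasurable Y μ)
    (hc : 0 < c) (hbdd : ∀ᵐ ω ∂μ, |Y ω| ≤ c) (hmean : ∫ ω, Y ω ∂μ = 0) :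
    log (∫ ω, exp (Y ω) ∂μ) ≤ (exp c - c - 1) / c ^ 2 * ∫ ω, Y ω ^ 2 ∂μ := by
  set K := (exp c - c - 1) / c ^ 2
  have hY_int : Integrable Y μ := .of_bound hY c (by simpa using hbdd)
  have hY_sq_int : Integrable (fun ω => Y ω ^ 2) μ :=
    .of_bound (hY.pow 2) (c ^ 2) <| by
      filter_upwards [hbdd] with ω hω
      simpa using pow_le_pow_left₀ (abs_nonneg _) hω 2
  have hexp_int : Integrable (fun ω => exp (Y ω)) μ :=
    .of_bound (continuous_exp.comp_aestronglyMeasurable hY) (exp c) <| by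
      filter_upwards [hbdd] with ω hω
      simpa using (le_abs_self _).trans hω
  have h_lin_int : Integrable (fun ω => 1 + Y ω) μ := (integrable_const 1).add hY_int
  have hmgf : ∫ ω, exp (Y ω) ∂μ ≤ 1 + K * ∫ ω, Y ω ^ 2 ∂μ :=
    calc ∫ ω, exp (Y ω) ∂μ ≤ ∫ ω, (1 + Y ω + K * Y ω ^ 2) ∂μ :=
          integral_mono_ae hexp_int (h_lin_int.add (hY_sq_int.const_mul K)) <| by
            filter_upwards [hbdd] with ω hω using exp_le_one_add_add_mul_sq hc hω
      _ = 1 + K * ∫ ω, Y ω ^ 2 ∂μ := by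
          rw [integral_add h_lin_int (hY_sq_int.const_mul K),
            integral_add (integrable_const 1) hY_int, integral_const_mul, hmean]
          simp
  linarith [log_le_sub_one_of_pos (integral_exp_pos hexp_int)]

end MeasureTheory

theorem stmt2 {Ω : Type*} [MeasurableSpace Ω] (μ : Measure Ω) [IsProbabilityMeasure μ]
    (X : Ω → ℝ) (a η : ℝ)
    (ha : 0 < a) (hη : 0 < η)
    (hmeas : Measurable X)
    (hbdd : ∀ᵐ ω ∂μ, |X ω| ≤ a) :
    ∀ κ : ℝ → ℝ, (κ = fun x => if x = 0 then 1/2 else (Real.exp x - x - 1) / x ^ 2) →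
      (∫ ω, X ω ∂μ) + (1 / η) * Real.log (∫ ω, Real.exp (-η * X ω) ∂μ) ≤
        κ (2 * η * a) * η * ∫ ω, (X ω - ∫ ω', X ω' ∂μ) ^ 2 ∂μ := by
  rintro κ rfl
  set m := ∫ ω, X ω ∂μ
  have hc : 0 < 2 * η * a := by positivity
  have hX_int : Integrable X μ := .of_bound hmeas.aestronglyMeasurable a (by simpa using hbdd)
  have hcent := ae_abs_sub_integral_le hbdd
  have hlog := log_integral_exp_le_of_abs_le (Y := fun ω => -η * (X ω - m))
    ((hmeas.sub_const m).const_mul (-η)).aestronglyMeasurable hc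
    (by
      filter_upwards [hcent] with ω hω
      rw [abs_mul, abs_neg, abs_of_pos hη]
      linarith [mul_le_mul_of_nonneg_left hω hη.le])
    (by rw [integral_const_mul, integral_sub hX_int (integrable_const m)]; simp [m])
  have hexp_pos : 0 < ∫ ω, exp (-η * (X ω - m)) ∂μ :=
    integral_exp_pos <| ProbabilityTheory.integrable_exp_mul_of_mem_Icc
      (hmeas.sub_const m).aemeasurable (by filter_upwards [hcent] with ω hω using abs_le.mp hω)
  have hvar : ∫ ω, (-η * (X ω - m)) ^ 2 ∂μ = η ^ 2 * ∫ ω, (X ω - m) ^ 2 ∂μ := by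
    rw [← integral_const_mul]
    congr 1 with ω
    ring
  rw [hvar] at hlog
  rw [log_integral_exp_mul_eq_add X (-η) m hexp_pos]
  simp only [hc.ne', ↓reduceIte]
  calc m + 1 / η * (-η * m + log (∫ ω, exp (-η * (X ω - m)) ∂μ))
      = log (∫ ω, exp (-η * (X ω - m)) ∂μ) / η := by field_simp; ring
    _ ≤ _ := by rw [div_le_iff₀ hη]; linear_combination hlog
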